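/- arXiv:cs/0609037 — 2 statements merged into one kernel-verified Lean document; each statement's English description precedes it below -/
import Mathlib

section
/- The first-order recursive computability ordering >_rco is stable by substitution: if t >_rco u and θ is a substitution, then tθ >_rco uθ. -/
/-- First-order algebraic terms over symbols `F` and variables `X`. -/
inductive FOTerm (F X : Type) : Type
  | var : X → FOTerm F X
  | app : F → List (FOTerm F X) → FOTerm F X

/-- Statuses: lexicographic or multiset comparison of arguments. -/
inductive Status : Type
  | lex
  | mul

/-- Left-to-right lexicographic extension of a "greater-than" relation. -/
inductive LexExt {α : Type*} (r : α → α → Prop) : List α → List α → Prop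
  | head {t u : α} {ts us : List α} : r t u → LexExt r (t :: ts) (u :: us)
  | tail {t : α} {ts us : List α} : LexExt r ts us → LexExt r (t :: ts) (t :: us)

/-- Multiset extension of a "greater-than" relation. -/
def MulExt {α : Type*} (r : α → α → Prop) (ts us : List α) : Prop :=
  ∃ Z X Y : Multiset α, X ≠ 0 ∧ (ts : Multiset α) = Z + X ∧ (us : Multiset α) = Z + Y ∧
    ∀ y ∈ Y, ∃ x ∈ X, r x y

/-- Extension of a relation to lists of terms according to a status. -/
def statExt {α : Type*} : Status → (α → α → Prop) → List α → List α → Prop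
  | Status.lex, r => LexExt r
  | Status.mul, r => MulExt r

/-- Strict part `>_F` of the quasi-order `≥_F`. -/
def PrecGT {F : Type*} (ge : F → F → Prop) (f g : F) : Prop := ge f g ∧ ¬ ge g f

/-- Equivalence `≃_F` associated with the quasi-order `≥_F`. -/
def PrecEquiv {F : Type*} (ge : F → F → Prop) (f g : F) : Prop := ge f g ∧ ge g f

/-- One step of the computability-closure operator `CR`: given a candidate relation `R`,
`CRStep ge stat R t u` holds iff `t >_rco u` can be derived by one application of
(arg), (prec), (call) or (red) with premises taken in `R`. -/
def CRStep {F X : Type} (ge : F → F → Prop) (stat : F → Status)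
    (R : FOTerm F X → FOTerm F X → Prop) (t u : FOTerm F X) : Prop :=
  -- (arg)
  (∃ f ts, t = FOTerm.app f ts ∧ u ∈ ts) ∨
  -- (prec)
  (∃ f ts g us, t = FOTerm.app f ts ∧ u = FOTerm.app g us ∧ PrecGT ge f g ∧
    ∀ v ∈ us, R t v) ∨
  -- (call)
  (∃ f ts g us, t = FOTerm.app f ts ∧ u = FOTerm.app g us ∧ PrecEquiv ge f g ∧
    (∀ v ∈ us, R t v) ∧ statExt (stat f) R ts us) ∨
  -- (red)
  (∃ f ts v, t = FOTerm.app f ts ∧ R t v ∧ R v u)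

/-- The first-order recursive computability ordering `>_rco`:
the least fixpoint of the monotone operator `CRStep`. -/
def Rco {F X : Type} (ge : F → F → Prop) (stat : F → Status)
    (t u : FOTerm F X) : Prop :=
  ∀ S : FOTerm F X → FOTerm F X → Prop,
    (∀ a b, CRStep ge stat S a b → S a b) → S t u

/-- Application of a substitution (a map from variables to terms) to a term. -/
def substFO {F X : Type} (θ : X → FOTerm F X) : FOTerm F X → FOTerm F X
  | FOTerm.var x => θ x
  | FOTerm.app f ts => FOTerm.app f (ts.attach.map fun t => substFO θ t.1)
decreasing_by
  have h := List.sizeOf_lt_of_mem t.2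
  simp only [FOTerm.app.sizeOf_spec]
  omega

/-! Each rule defining `>_rco` inspects only head symbols and argument lists, so any map `σ` on
terms commuting with applications (a substitution in particular) sends a `CRStep` whose premises
hold in the pulled-back relation `σ⁻¹ S` to a `CRStep` with premises in `S`. Hence `σ⁻¹ S` is
closed under `CRStep` whenever `S` is, and the least fixpoint `>_rco` is contained in it. -/

@[simp]
lemma substFO_app {F X : Type} (θ : X → FOTerm F X) (f : F) (ts : List (FOTerm F X)) :
    substFO θ (FOTerm.app f ts) = FOTerm.app f (ts.map (substFO θ)) := by
  rw [substFO]
  simp only [List.map_attach_eq_pmap, List.pmap_eq_map]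

section Extensions

variable {α β : Type*} {r : α → α → Prop} {r' : β → β → Prop} {f : α → β}

lemma LexExt.map (h : ∀ a b, r a b → r' (f a) (f b)) {ts us : List α}
    (hl : LexExt r ts us) : LexExt r' (ts.map f) (us.map f) := by
  induction hl with
  | head hr => exact LexExt.head (h _ _ hr)
  | tail _ ih => exact LexExt.tail ih

lemma MulExt.map (h : ∀ a b, r a b → r' (f a) (f b)) {ts us : List α}
    (hm : MulExt r ts us) : MulExt r' (ts.map f) (us.map f) := by
  obtain ⟨Z, Xs, Y, hX, hts, hus, hY⟩ := hm
  refine ⟨Z.map f, Xs.map f, Y.map f, by simpa using hX, ?_, ?_, ?_⟩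
  · rw [← Multiset.map_coe, hts, Multiset.map_add]
  · rw [← Multiset.map_coe, hus, Multiset.map_add]
  · simp only [Multiset.mem_map, forall_exists_index, and_imp, forall_apply_eq_imp_iff₂]
    intro y hy
    obtain ⟨x, hx, hr⟩ := hY y hy
    exact ⟨f x, ⟨x, hx, rfl⟩, h _ _ hr⟩

lemma statExt_map (s : Status) (h : ∀ a b, r a b → r' (f a) (f b)) {ts us : List α}
    (he : statExt s r ts us) : statExt s r' (ts.map f) (us.map f) := by
  cases s
  · exact LexExt.map h he
  · exact MulExt.map h he

end Extensions

section MapApp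

variable {F X : Type} {ge : F → F → Prop} {stat : F → Status} {σ : FOTerm F X → FOTerm F X}

lemma crStep_map (hσ : ∀ f ts, σ (FOTerm.app f ts) = FOTerm.app f (ts.map σ))
    {S : FOTerm F X → FOTerm F X → Prop} {a b : FOTerm F X}
    (hab : CRStep ge stat (fun a b => S (σ a) (σ b)) a b) :
    CRStep ge stat S (σ a) (σ b) := by
  rcases hab with ⟨f, ts, rfl, hu⟩ | ⟨f, ts, g, us, rfl, rfl, hfg, hv⟩ |
    ⟨f, ts, g, us, rfl, rfl, hfg, hv, hst⟩ | ⟨f, ts, v, rfl, h1, h2⟩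
  · exact Or.inl ⟨f, ts.map σ, hσ f ts, List.mem_map_of_mem hu⟩
  · refine Or.inr (Or.inl ⟨f, ts.map σ, g, us.map σ, hσ f ts, hσ g us, hfg, ?_⟩)
    simpa only [hσ] using List.forall_mem_map.2 hv
  · refine Or.inr (Or.inr (Or.inl ⟨f, ts.map σ, g, us.map σ, hσ f ts, hσ g us, hfg, ?_,
      statExt_map (stat f) (f := σ) (r' := S) (fun _ _ h => h) hst⟩))
    simpa only [hσ] using List.forall_mem_map.2 hv
  · exact Or.inr (Or.inr (Or.inr ⟨f, ts.map σ, σ v, hσ f ts, h1, h2⟩))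

lemma rco_map (hσ : ∀ f ts, σ (FOTerm.app f ts) = FOTerm.app f (ts.map σ))
    {t u : FOTerm F X} (h : Rco ge stat t u) : Rco ge stat (σ t) (σ u) :=
  fun S hS => h (fun a b => S (σ a) (σ b)) fun _ _ hab => hS _ _ (crStep_map hσ hab)

end MapApp

theorem rco_stable_subst_general {F X : Type} (ge : F → F → Prop)
    (stat : F → Status) :
    ∀ (t u : FOTerm F X) (θ : X → FOTerm F X),
      Rco ge stat t u → Rco ge stat (substFO θ t) (substFO θ u) :=
  fun _ _ θ => rco_map (substFO_app θ)

/-- The first-order recursive computability ordering `>_rco` is stable by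
substitution: if `t >_rco u` then `tθ >_rco uθ`. -/
theorem rco_stable_subst {F X : Type} (ge : F → F → Prop)
    (ge_refl : ∀ f, ge f f)
    (ge_trans : ∀ f g h, ge f g → ge g h → ge f h)
    (stat : F → Status) :
    ∀ (t u : FOTerm F X) (θ : X → FOTerm F X),
      Rco ge stat t u → Rco ge stat (substFO θ t) (substFO θ u) :=
  rco_stable_subst_general ge stat
end

section
/- The first-order recursive computability ordering >_rco is stable by context: if t >_rco u then for every context, f as t bs >_rco f as u bs, and more generally C[t] >_rco C[u] for any one-hole context C. -/
/-- One-hole contexts over first-order terms. -/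
inductive FOCtx (F X : Type) : Type
  | hole : FOCtx F X
  | node : F → List (FOTerm F X) → FOCtx F X → List (FOTerm F X) → FOCtx F X

/-- Filling the hole of a context with a term. -/
def FOCtx.fill {F X : Type} : FOCtx F X → FOTerm F X → FOTerm F X
  | FOCtx.hole, t => t
  | FOCtx.node f as C bs, t => FOTerm.app f (as ++ C.fill t :: bs)

theorem lexExt_mono {α : Type*} {r s : α → α → Prop} (h : ∀ a b, r a b → s a b)
    {ts us : List α} (hl : LexExt r ts us) : LexExt s ts us := by
  induction hl with
  | head h' => exact LexExt.head (h _ _ h')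
  | tail _ ih => exact LexExt.tail ih

theorem mulExt_mono {α : Type*} {r s : α → α → Prop} (h : ∀ a b, r a b → s a b)
    {ts us : List α} (hm : MulExt r ts us) : MulExt s ts us := by
  obtain ⟨Z, X, Y, hX, h1, h2, h3⟩ := hm
  exact ⟨Z, X, Y, hX, h1, h2, fun y hy => by
    obtain ⟨x, hx, hr⟩ := h3 y hy; exact ⟨x, hx, h _ _ hr⟩⟩

theorem statExt_mono {α : Type*} {r s : α → α → Prop} (st : Status)
    (h : ∀ a b, r a b → s a b) {ts us : List α} (hm : statExt st r ts us) :
    statExt st s ts us := by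
  cases st
  · exact lexExt_mono h hm
  · exact mulExt_mono h hm

theorem crstep_mono {F X : Type} (ge : F → F → Prop) (stat : F → Status)
    {R S : FOTerm F X → FOTerm F X → Prop} (h : ∀ a b, R a b → S a b)
    {t u : FOTerm F X} (hc : CRStep ge stat R t u) : CRStep ge stat S t u := by
  rcases hc with h1 | h2 | h3 | h4
  · exact Or.inl h1
  · obtain ⟨f, ts, g, us, e1, e2, hp, hall⟩ := h2
    exact Or.inr (Or.inl ⟨f, ts, g, us, e1, e2, hp, fun v hv => h _ _ (hall v hv)⟩)
  · obtain ⟨f, ts, g, us, e1, e2, hp, hall, hst⟩ := h3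
    exact Or.inr (Or.inr (Or.inl ⟨f, ts, g, us, e1, e2, hp,
      fun v hv => h _ _ (hall v hv), statExt_mono _ h hst⟩))
  · obtain ⟨f, ts, v, e1, h1, h2⟩ := h4
    exact Or.inr (Or.inr (Or.inr ⟨f, ts, v, e1, h _ _ h1, h _ _ h2⟩))

theorem rco_fold {F X : Type} (ge : F → F → Prop) (stat : F → Status)
    {t u : FOTerm F X} (h : CRStep ge stat (Rco ge stat) t u) : Rco ge stat t u := by
  intro S hS
  exact hS _ _ (crstep_mono ge stat (fun a b hab => hab S hS) h)

theorem lexExt_append {α : Type*} {r : α → α → Prop} {t u : α} (h : r t u) :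
    ∀ (as bs : List α), LexExt r (as ++ t :: bs) (as ++ u :: bs)
  | [], _ => LexExt.head h
  | a :: as, bs => LexExt.tail (lexExt_append h as bs)

theorem rco_app {F X : Type} (ge : F → F → Prop) (ge_refl : ∀ f, ge f f)
    (stat : F → Status) {t u : FOTerm F X} (htu : Rco ge stat t u)
    (f : F) (as bs : List (FOTerm F X)) :
    Rco ge stat (FOTerm.app f (as ++ t :: bs)) (FOTerm.app f (as ++ u :: bs)) := by
  have harg : ∀ v ∈ as ++ t :: bs, Rco ge stat (FOTerm.app f (as ++ t :: bs)) v :=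
    fun v hv => rco_fold ge stat (Or.inl ⟨f, _, rfl, hv⟩)
  have ht : Rco ge stat (FOTerm.app f (as ++ t :: bs)) t :=
    harg t (by simp)
  have hu : Rco ge stat (FOTerm.app f (as ++ t :: bs)) u :=
    rco_fold ge stat (Or.inr (Or.inr (Or.inr ⟨f, _, t, rfl, ht, htu⟩)))
  apply rco_fold ge stat
  refine Or.inr (Or.inr (Or.inl ⟨f, _, f, _, rfl, rfl, ⟨ge_refl f, ge_refl f⟩, ?_, ?_⟩))
  · intro v hv
    rcases List.mem_append.1 hv with h | h
    · exact harg v (List.mem_append.2 (Or.inl h))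
    · rcases List.mem_cons.1 h with h | h
      · subst h; exact hu
      · exact harg v (List.mem_append.2 (Or.inr (List.mem_cons.2 (Or.inr h))))
  · cases hst : stat f with
    | lex => exact lexExt_append htu as bs
    | mul =>
        refine ⟨(as : Multiset (FOTerm F X)) + bs, {t}, {u}, by simp, ?_, ?_, ?_⟩
        · rw [← Multiset.coe_add, ← Multiset.cons_coe, ← Multiset.singleton_add]; abel
        · rw [← Multiset.coe_add, ← Multiset.cons_coe, ← Multiset.singleton_add]; abel
        · intro y hy
          simp only [Multiset.mem_singleton] at hy
          subst hy
          exact ⟨t, by simp, htu⟩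

/-- The first-order recursive computability ordering `>_rco` is stable by context:
if `t >_rco u` then `f as t bs >_rco f as u bs` and, more generally,
`C[t] >_rco C[u]` for every one-hole context `C`. -/
theorem rco_stable_context {F X : Type} (ge : F → F → Prop)
    (ge_refl : ∀ f, ge f f)
    (ge_trans : ∀ f g h, ge f g → ge g h → ge f h)
    (stat : F → Status) :
    ∀ t u : FOTerm F X, Rco ge stat t u →
      (∀ (f : F) (as bs : List (FOTerm F X)),
        Rco ge stat (FOTerm.app f (as ++ t :: bs)) (FOTerm.app f (as ++ u :: bs))) ∧
      (∀ C : FOCtx F X, Rco ge stat (C.fill t) (C.fill u)) := by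
  intro t u htu
  refine ⟨fun f as bs => rco_app ge ge_refl stat htu f as bs, ?_⟩
  intro C
  induction C with
  | hole => exact htu
  | node f as C bs ih => exact rco_app ge ge_refl stat ih f as bs
end
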